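/- arXiv:2605.11694 — 6 statements merged into one kernel-verified Lean document; each statement's English description precedes it below -/
import Mathlib

section
/- Let {δ_t} be a nonnegative real sequence and E > 0 a constant such that (E/2)·δ_{t+1}² + δ_{t+1} ≤ δ_t for all t ≥ 1. Then for all t ≥ 1, δ_t ≤ max{δ_1, 4/E} / t. -/
/-!
With `M = max δ₁ (4/E)` we show `δ_t ≤ M/t` by induction. The map `x ↦ (E/2)x² + x` is
strictly increasing on `[0, ∞)`, and `E M ≥ 4` makes it send `M/(t+1)` to at least `M/t`:
the gap `M/t - M/(t+1) = M/(t(t+1))` is at most `2M/(t+1)² ≤ (E/2)(M/(t+1))²`.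
So `(E/2)δ_{t+1}² + δ_{t+1} ≤ δ_t ≤ M/t` forces `δ_{t+1} ≤ M/(t+1)`.
-/

lemma div_le_quadratic_div_succ {E M t : ℝ} (hM : 0 < M) (hEM : 4 ≤ E * M) (ht : 1 ≤ t) :
    M / t ≤ E / 2 * (M / (t + 1)) ^ 2 + M / (t + 1) := by
  have ht0 : 0 < t := by linarith
  calc M / t = M / (t * (t + 1)) + M / (t + 1) := by field_simp; ring
    _ ≤ 2 * M / (t + 1) ^ 2 + M / (t + 1) := by
      gcongr ?_ + _
      rw [div_le_div_iff₀ (by positivity) (by positivity)]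
      nlinarith [mul_nonneg (mul_nonneg hM.le ht0.le) (sub_nonneg.2 ht)]
    _ ≤ E / 2 * (M / (t + 1)) ^ 2 + M / (t + 1) := by
      gcongr ?_ + _
      rw [div_pow, ← mul_div_assoc]
      gcongr ?_ / _
      nlinarith [mul_le_mul_of_nonneg_right hEM hM.le]

lemma le_div_succ_of_quadratic_le {E M t x : ℝ} (hM : 0 < M) (hEM : 4 ≤ E * M) (ht : 1 ≤ t)
    (hx : E / 2 * x ^ 2 + x ≤ M / t) : x ≤ M / (t + 1) := by
  have hE : 0 < E := by nlinarith
  by_contra! hlt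
  have hpos : 0 < M / (t + 1) := by positivity
  have hmono : E / 2 * (M / (t + 1)) ^ 2 + M / (t + 1) < E / 2 * x ^ 2 + x := by
    have : (M / (t + 1)) ^ 2 < x ^ 2 := by gcongr
    nlinarith
  linarith [div_le_quadratic_div_succ hM hEM ht]

theorem stmt0_general (δ : ℕ → ℝ) (E : ℝ) (hE : 0 < E)
    (hrec : ∀ t ≥ 1, (E / 2) * (δ (t + 1))^2 + δ (t + 1) ≤ δ t) :
    ∀ t ≥ 1, δ t ≤ max (δ 1) (4 / E) / (t : ℝ) := by
  set M := max (δ 1) (4 / E)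
  have hEM : 4 ≤ E * M := by
    rw [← div_le_iff₀' hE]
    exact le_max_right _ _
  have hM : 0 < M := lt_of_lt_of_le (by positivity) (le_max_right _ _)
  intro t ht
  induction t, ht using Nat.le_induction with
  | base =>
    simp only [Nat.cast_one, div_one]
    exact le_max_left _ _
  | succ t ht ih =>
    push_cast
    exact le_div_succ_of_quadratic_le hM hEM (by exact_mod_cast ht) ((hrec t ht).trans ih)

theorem stmt0 (δ : ℕ → ℝ) (E : ℝ) (hE : 0 < E)
    (hnn : ∀ t ≥ 1, 0 ≤ δ t)
    (hrec : ∀ t ≥ 1, (E / 2) * (δ (t + 1))^2 + δ (t + 1) ≤ δ t) :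
    ∀ t ≥ 1, δ t ≤ max (δ 1) (4 / E) / (t : ℝ) :=
  stmt0_general δ E hE hrec
end

section
/- Let {α_k} be a sequence with α_1 ≤ 1, α_2 ≤ 1, and let D ∈ (0, 1/2) satisfy √(2D) < 1. Suppose α_{k+1} ≤ α_k − α_k²/2 + D for all k ≥ 2, and α_k ∈ [0,1] for all k. Then for all k ≥ 1, α_k ≤ 2/k + √(2D). -/
/-!
With `s = √(2D)` we have `D ≤ s²/2`, so the recursion reads `α (k+1) ≤ g (α k) + s²/2` for
`g x = x - x²/2`, and `s` is a fixed point of `x ↦ g x + s²/2`. The excess `c k = max (α k - s) 0`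
then obeys the unperturbed recursion `c (k+1) ≤ g (c k)`, because `g a - g s ≤ g (a - s)` for
`a ≥ s ≥ 0`. Since `g` is increasing on `(-∞, 1]` and `g (2/n) ≤ 2/(n+1)`, induction gives
`c n ≤ 2/n`.
-/

lemma sub_sq_half_le_sub_sq_half {x y : ℝ} (hxy : x ≤ y) (hy : y ≤ 1) :
    x - x ^ 2 / 2 ≤ y - y ^ 2 / 2 := by
  nlinarith

lemma two_div_sub_sq_half_le {x : ℝ} (hx : 0 < x) :
    2 / x - (2 / x) ^ 2 / 2 ≤ 2 / (x + 1) := by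
  have hsq : 2 / x - (2 / x) ^ 2 / 2 = 2 * (x - 1) / x ^ 2 := by
    field_simp
  rw [hsq, div_le_div_iff₀ (by positivity) (by positivity)]
  nlinarith

lemma sub_sq_half_sub_le_max {a s : ℝ} (hs₀ : 0 ≤ s) (hs₁ : s ≤ 1) :
    (a - a ^ 2 / 2) - (s - s ^ 2 / 2) ≤ max (a - s) 0 - (max (a - s) 0) ^ 2 / 2 := by
  rcases le_total a s with has | hsa
  · rw [max_eq_right (by linarith)]
    linarith [sub_sq_half_le_sub_sq_half has hs₁]
  · rw [max_eq_left (by linarith)]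
    nlinarith

lemma le_two_div_of_le_sub_sq_half {c : ℕ → ℝ} {m : ℕ} (hm : 2 ≤ m)
    (hcm : c m ≤ 2 / m) (hrec : ∀ n ≥ m, c (n + 1) ≤ c n - c n ^ 2 / 2) :
    ∀ n ≥ m, c n ≤ 2 / n := by
  intro n hn
  induction n, hn using Nat.le_induction with
  | base => exact hcm
  | succ n hn ih =>
    have hn₂ : (2 : ℝ) ≤ n := by exact_mod_cast hm.trans hn
    have htwo_div_le_one : 2 / (n : ℝ) ≤ 1 := by
      rw [div_le_one (by linarith)]
      exact hn₂
    calc c (n + 1) ≤ c n - c n ^ 2 / 2 := hrec n hn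
      _ ≤ 2 / n - (2 / n) ^ 2 / 2 := sub_sq_half_le_sub_sq_half ih htwo_div_le_one
      _ ≤ 2 / (n + 1 : ℕ) := by
        push_cast
        exact two_div_sub_sq_half_le (by linarith)

theorem stmt1_general (α : ℕ → ℝ) (D : ℝ)
    (hDlt : Real.sqrt (2 * D) < 1)
    (hmem : ∀ k, α k ∈ Set.Icc (0:ℝ) 1)
    (hrec : ∀ k ≥ 2, α (k + 1) ≤ α k - (α k)^2 / 2 + D) :
    ∀ k ≥ 1, α k ≤ 2 / (k : ℝ) + Real.sqrt (2 * D) := by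
  have hD : D ≤ Real.sqrt (2 * D) ^ 2 / 2 := by
    rw [Real.sq_sqrt']
    linarith [le_max_left (2 * D) 0]
  set s := Real.sqrt (2 * D)
  have hs₀ : 0 ≤ s := Real.sqrt_nonneg _
  have hexcess : ∀ n ≥ 2, max (α n - s) 0 ≤ 2 / n := by
    refine le_two_div_of_le_sub_sq_half le_rfl ?_ fun n hn => ?_
    · norm_num
      linarith [(hmem 2).2]
    · have hc₀ : 0 ≤ max (α n - s) 0 := le_max_right _ _
      have hc₁ : max (α n - s) 0 ≤ 1 := max_le (by linarith [(hmem n).2]) zero_le_one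
      have hstep := sub_sq_half_sub_le_max (a := α n) hs₀ hDlt.le
      refine max_le ?_ ?_
      · linarith [hrec n hn]
      · nlinarith
  intro k hk
  rcases hk.eq_or_lt with rfl | hk
  · norm_num
    linarith [(hmem 1).2]
  · linarith [hexcess k hk, le_max_left (α k - s) 0]

theorem stmt1 (α : ℕ → ℝ) (D : ℝ) (hD : 0 < D)
    (hDlt : Real.sqrt (2 * D) < 1)
    (hmem : ∀ k, α k ∈ Set.Icc (0:ℝ) 1)
    (h1 : α 1 ≤ 1) (h2 : α 2 ≤ 1)
    (hrec : ∀ k ≥ 2, α (k + 1) ≤ α k - (α k)^2 / 2 + D) :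
    ∀ k ≥ 1, α k ≤ 2 / (k : ℝ) + Real.sqrt (2 * D) :=
  stmt1_general α D hDlt hmem hrec
end

section
/- Let d : ℝ^m → ℝ be concave, differentiable, and (1/β)-smooth (i.e., ‖∇d(λ) − ∇d(μ)‖ ≤ (1/β)‖λ − μ‖). Consider the update λ_{t+1} = λ_t + (β/2)·g_t, where ‖∇d(λ_t) − g_t‖² ≤ 2ε_t/β and d̄_t is a quantity with d(λ_t) ≤ d̄_t ≤ d(λ_t) + ε_t. Then d(λ_{t+1}) ≥ d̄_t + (β/4)‖g_t‖² − 2ε_t. -/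
/-!
Along the segment from `λ` to `λ + v`, the `(1/β)`-Lipschitz gradient makes the slope of `d`
drop at most linearly, which gives the descent lemma
`d (λ + v) ≥ d λ + ⟪∇d λ, v⟫ - ‖v‖² / (2β)`. For the step `v = (β/2) g`, Young's inequality
`⟪∇d λ, g⟫ ≥ (3/4)‖g‖² - ‖∇d λ - g‖²` turns this into a gain of `(β/4)‖g‖²` at the cost of
`(β/2)‖∇d λ - g‖² ≤ ε`; passing from `d λ` to `d̄ ≤ d λ + ε` costs another `ε`.
-/

open InnerProductSpace Set

lemma sub_le_sub_of_hasDerivAt_ge_affine {f f' : ℝ → ℝ} {a b : ℝ}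
    (hf : ∀ t, HasDerivAt f (f' t) t) (hf' : ∀ t ∈ Ioo (0 : ℝ) 1, a - b * t ≤ f' t) :
    a - b / 2 ≤ f 1 - f 0 := by
  let ψ : ℝ → ℝ := fun t => f t - (a * t - b / 2 * t ^ 2)
  have hψ : ∀ t, HasDerivAt ψ (f' t - (a - b * t)) t := fun t => by
    have := (hf t).sub (((hasDerivAt_id t).const_mul a).sub
      ((hasDerivAt_pow 2 t).const_mul (b / 2)))
    exact this.congr_deriv (by ring)
  have hmono : MonotoneOn ψ (Icc 0 1) := by
    refine monotoneOn_of_deriv_nonneg (convex_Icc 0 1)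
      (fun t _ => (hψ t).continuousAt.continuousWithinAt)
      (fun t _ => (hψ t).differentiableAt.differentiableWithinAt) fun t ht => ?_
    rw [interior_Icc] at ht
    rw [(hψ t).deriv]
    linarith [hf' t ht]
  have := hmono (left_mem_Icc.2 zero_le_one) (right_mem_Icc.2 zero_le_one) zero_le_one
  simp only [ψ] at this
  linarith

variable {E : Type*} [NormedAddCommGroup E] [InnerProductSpace ℝ E]

lemma three_quarters_norm_sq_sub_norm_sub_sq_le_inner (a g : E) :
    3 / 4 * ‖g‖ ^ 2 - ‖a - g‖ ^ 2 ≤ ⟪a, g⟫_ℝ := by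
  have hsplit : ⟪a, g⟫_ℝ = ⟪a - g, g⟫_ℝ + ‖g‖ ^ 2 := by
    rw [inner_sub_left, real_inner_self_eq_norm_sq]; ring
  have hyoung := norm_add_sq_real (a - g) ((1 / 2 : ℝ) • g)
  rw [real_inner_smul_right, norm_smul, Real.norm_of_nonneg (by norm_num)] at hyoung
  nlinarith [sq_nonneg ‖a - g + (1 / 2 : ℝ) • g‖]

variable [CompleteSpace E]

lemma HasGradientAt.hasDerivAt_comp_add_smul {d : E → ℝ} {x v d' : E} {t : ℝ}
    (h : HasGradientAt d d' (x + t • v)) :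
    HasDerivAt (fun s : ℝ => d (x + s • v)) ⟪d', v⟫_ℝ t := by
  have hline : HasDerivAt (fun s : ℝ => x + s • v) v t := by
    simpa using ((hasDerivAt_id t).smul_const v).const_add x
  have := h.hasFDerivAt.comp_hasDerivAt t hline
  rwa [toDual_apply_apply] at this

theorem le_apply_add_of_lipschitz_gradient {d : E → ℝ} {L : ℝ} (hdiff : Differentiable ℝ d)
    (hlip : ∀ x y, ‖gradient d x - gradient d y‖ ≤ L * ‖x - y‖) (x v : E) :
    d x + ⟪gradient d x, v⟫_ℝ - L / 2 * ‖v‖ ^ 2 ≤ d (x + v) := by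
  have hderiv : ∀ t : ℝ, HasDerivAt (fun s : ℝ => d (x + s • v))
      ⟪gradient d (x + t • v), v⟫_ℝ t := fun t =>
    (hdiff _).hasGradientAt.hasDerivAt_comp_add_smul
  have hslope : ∀ t ∈ Ioo (0 : ℝ) 1,
      ⟪gradient d x, v⟫_ℝ - L * ‖v‖ ^ 2 * t ≤ ⟪gradient d (x + t • v), v⟫_ℝ := by
    intro t ht
    have hgrad : ‖gradient d (x + t • v) - gradient d x‖ * ‖v‖ ≤ L * ‖v‖ ^ 2 * t := by
      calc ‖gradient d (x + t • v) - gradient d x‖ * ‖v‖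
          ≤ L * ‖x + t • v - x‖ * ‖v‖ := by gcongr; exact hlip _ _
        _ = L * ‖v‖ ^ 2 * t := by
          rw [add_sub_cancel_left, norm_smul, Real.norm_of_nonneg ht.1.le]; ring
    have := (abs_le.1 ((abs_real_inner_le_norm _ v).trans hgrad)).1
    rw [inner_sub_left] at this
    linarith
  have := sub_le_sub_of_hasDerivAt_ge_affine hderiv hslope
  simp only [zero_smul, add_zero, one_smul] at this
  linarith

theorem le_apply_add_smul_of_lipschitz_gradient {d : E → ℝ} {β : ℝ} (hβ : 0 < β)
    (hdiff : Differentiable ℝ d)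
    (hlip : ∀ x y, ‖gradient d x - gradient d y‖ ≤ (1 / β) * ‖x - y‖) (x g : E) :
    d x + β / 4 * ‖g‖ ^ 2 - β / 2 * ‖gradient d x - g‖ ^ 2 ≤ d (x + (β / 2) • g) := by
  have hdescent := le_apply_add_of_lipschitz_gradient hdiff hlip x ((β / 2) • g)
  have hinner := three_quarters_norm_sq_sub_norm_sub_sq_le_inner (gradient d x) g
  rw [real_inner_smul_right, norm_smul, Real.norm_of_nonneg (by positivity)] at hdescent
  have hquad : 1 / β / 2 * (β / 2 * ‖g‖) ^ 2 = β / 8 * ‖g‖ ^ 2 := by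
    field_simp; ring
  nlinarith

theorem stmt7_general {m : ℕ} (β : ℝ) (hβ : 0 < β)
    (d : EuclideanSpace ℝ (Fin m) → ℝ)
    (hdiff : Differentiable ℝ d)
    (hsmooth : ∀ x y, ‖gradient d x - gradient d y‖ ≤ (1 / β) * ‖x - y‖)
    (lamt g : EuclideanSpace ℝ (Fin m)) (εt : ℝ)
    (hg : ‖gradient d lamt - g‖^2 ≤ 2 * εt / β)
    (dbar : ℝ) (hdbar2 : dbar ≤ d lamt + εt) :
    d (lamt + (β / 2) • g) ≥ dbar + (β / 4) * ‖g‖^2 - 2 * εt := by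
  have hstep := le_apply_add_smul_of_lipschitz_gradient hβ hdiff hsmooth lamt g
  have herr : β / 2 * ‖gradient d lamt - g‖ ^ 2 ≤ εt := by
    calc β / 2 * ‖gradient d lamt - g‖ ^ 2 ≤ β / 2 * (2 * εt / β) := by gcongr
      _ = εt := by field_simp
  linarith

theorem stmt7 {m : ℕ} (β : ℝ) (hβ : 0 < β)
    (d : EuclideanSpace ℝ (Fin m) → ℝ)
    (hconc : ConcaveOn ℝ Set.univ d) (hdiff : Differentiable ℝ d)
    (hsmooth : ∀ x y, ‖gradient d x - gradient d y‖ ≤ (1 / β) * ‖x - y‖)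
    (lamt g : EuclideanSpace ℝ (Fin m)) (εt : ℝ) (hε : 0 ≤ εt)
    (hg : ‖gradient d lamt - g‖^2 ≤ 2 * εt / β)
    (dbar : ℝ) (hdbar1 : d lamt ≤ dbar) (hdbar2 : dbar ≤ d lamt + εt) :
    d (lamt + (β / 2) • g) ≥ dbar + (β / 4) * ‖g‖^2 - 2 * εt :=
  stmt7_general β hβ d hdiff hsmooth lamt g εt hg dbar hdbar2
end

section
/- Let {δ_t} be nonnegative with δ_{t+1} ≤ δ_t − κ·δ_t² + ω·ε_t where κ, ω > 0 and ε_t = σ/t² with σ > 0. Then for all t ≥ 1, δ_t ≤ C/t, where C = (4/κ)(1 + √(2ωσκ(ωσκ + 1))) + 4·max{δ_1, 4/κ}. -/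
/-!
Write `f x = x - κ x²`, so that `δ (t+1) ≤ f (δ t) + a / t²` with `a = ω σ`, and induct on `δ t ≤ C / t`.
Far from the start (`2 κ C ≤ t`) the bound `C / t` lies where `f` is increasing, so
`δ (t+1) ≤ f (C / t) + a / t²`, which is at most `C / (t+1)` as soon as `C + a ≤ κ C²`.
Near the start we only use `f ≤ 1 / (4 κ)`; since `t < 2 κ C` there, this is again at most `C / (t+1)`
once `C` dominates `1 / (2 κ) + 4 a`. Both conditions on `C` follow from `2 / κ + 4 a ≤ C`,
which the stated constant satisfies because its square root is at least `ω σ κ`.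
-/

section QuadraticRecursion

variable {κ a C x y n : ℝ}

lemma sub_mul_sq_le_sub_mul_sq (hκ : 0 ≤ κ) (hxy : x ≤ y) (hy : 2 * κ * y ≤ 1) :
    x - κ * x ^ 2 ≤ y - κ * y ^ 2 := by
  have : 0 ≤ (y - x) * (1 - κ * x - κ * y) :=
    mul_nonneg (by linarith) (by nlinarith [mul_le_mul_of_nonneg_left hxy hκ])
  nlinarith

lemma sub_mul_sq_le_inv_four_mul (hκ : 0 < κ) (x : ℝ) : x - κ * x ^ 2 ≤ 1 / (4 * κ) := by
  rw [le_div_iff₀ (by positivity)]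
  nlinarith [sq_nonneg (2 * κ * x - 1)]

lemma div_sub_mul_div_sq_add_div_sq_le (hn : 0 < n) (hC : 0 ≤ C) (hCa : C + a ≤ κ * C ^ 2) :
    C / n - κ * (C / n) ^ 2 + a / n ^ 2 ≤ C / (n + 1) := by
  have key : C * n - κ * C ^ 2 + a ≤ C * n ^ 2 / (n + 1) := by
    rw [le_div_iff₀ (by positivity)]
    nlinarith [mul_le_mul_of_nonneg_right hCa hn.le]
  calc C / n - κ * (C / n) ^ 2 + a / n ^ 2 = (C * n - κ * C ^ 2 + a) / n ^ 2 := by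
        field_simp
    _ ≤ C * n ^ 2 / (n + 1) / n ^ 2 := by gcongr
    _ = C / (n + 1) := by field_simp

lemma inv_four_mul_add_div_sq_le (hκ : 0 < κ) (ha : 0 ≤ a) (hn : 1 ≤ n) (hnC : n ≤ 2 * κ * C)
    (hC : 1 / (2 * κ) + 4 * a ≤ C) : 1 / (4 * κ) + a / n ^ 2 ≤ C / (n + 1) := by
  have hstart : 1 / (4 * κ) * (n + 1) ≤ C / 2 + 1 / (4 * κ) := by
    rw [one_div_mul_eq_div, div_le_iff₀ (by positivity)]
    field_simp
    linarith
  have htail : a / n ^ 2 * (n + 1) ≤ 2 * a := by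
    rw [div_mul_eq_mul_div, div_le_iff₀ (by positivity)]
    nlinarith [mul_le_mul_of_nonneg_left (show n + 1 ≤ 2 * n ^ 2 by nlinarith) ha]
  have h2κ : 1 / (4 * κ) + 1 / (4 * κ) = 1 / (2 * κ) := by field_simp; ring
  rw [le_div_iff₀ (by positivity), add_mul]
  linarith

lemma add_le_mul_sq (hκ : 0 < κ) (ha : 0 ≤ a) (hC : 2 / κ + a ≤ C) : C + a ≤ κ * C ^ 2 := by
  have hκC : 2 ≤ κ * C := (div_le_iff₀' hκ).1 (by linarith)
  have haC : a ≤ C := le_trans (by linarith [div_nonneg zero_le_two hκ.le]) hC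
  nlinarith

theorem le_div_of_le_sub_mul_sq_add_div_sq {δ : ℕ → ℝ} (hκ : 0 < κ) (ha : 0 ≤ a)
    (hrec : ∀ t ≥ 1, δ (t + 1) ≤ δ t - κ * δ t ^ 2 + a / (t : ℝ) ^ 2)
    (h1 : δ 1 ≤ C) (hC : 2 / κ + 4 * a ≤ C) :
    ∀ t ≥ 1, δ t ≤ C / t := by
  have hCnonneg : 0 ≤ C := le_trans (by positivity) hC
  have hCa : C + a ≤ κ * C ^ 2 := add_le_mul_sq hκ ha (by linarith)
  intro t ht
  induction t, ht using Nat.le_induction with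
  | base => simpa using h1
  | succ n hn ih =>
    have hn' : (1 : ℝ) ≤ n := by exact_mod_cast hn
    push_cast
    by_cases hfar : 2 * κ * C ≤ n
    · have hCn : 2 * κ * (C / n) ≤ 1 := by
        rw [← mul_div_assoc, div_le_one (by positivity)]
        exact hfar
      calc δ (n + 1) ≤ δ n - κ * δ n ^ 2 + a / (n : ℝ) ^ 2 := hrec n hn
        _ ≤ C / n - κ * (C / n) ^ 2 + a / (n : ℝ) ^ 2 := by
          gcongr ?_ + _
          exact sub_mul_sq_le_sub_mul_sq hκ.le ih hCn
        _ ≤ C / (n + 1) :=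
          div_sub_mul_div_sq_add_div_sq_le (by positivity) hCnonneg hCa
    · calc δ (n + 1) ≤ δ n - κ * δ n ^ 2 + a / (n : ℝ) ^ 2 := hrec n hn
        _ ≤ 1 / (4 * κ) + a / (n : ℝ) ^ 2 := by
          gcongr ?_ + _
          exact sub_mul_sq_le_inv_four_mul hκ _
        _ ≤ C / (n + 1) := by
          refine inv_four_mul_add_div_sq_le hκ ha hn' (by linarith) ?_
          have : 1 / (2 * κ) ≤ 2 / κ := by
            rw [div_le_div_iff₀ (by positivity) hκ]
            linarith
          linarith

end QuadraticRecursion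

lemma le_sqrt_two_mul_mul_add_one (p : ℝ) : p ≤ √(2 * p * (p + 1)) := by
  rcases le_or_gt p 0 with hp | hp
  · exact hp.trans (Real.sqrt_nonneg _)
  · exact Real.le_sqrt_of_sq_le (by nlinarith)

theorem stmt11_general (δ : ℕ → ℝ) (κ ω σ : ℝ) (hκ : 0 < κ) (hω : 0 < ω) (hσ : 0 < σ)
    (hrec : ∀ t ≥ 1, δ (t + 1) ≤ δ t - κ * (δ t)^2 + ω * (σ / (t : ℝ)^2)) :
    ∀ t ≥ 1, δ t ≤ ((4 / κ) * (1 + Real.sqrt (2 * ω * σ * κ * (ω * σ * κ + 1)))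
        + 4 * max (δ 1) (4 / κ)) / (t : ℝ) := by
  have hs : ω * σ * κ ≤ √(2 * ω * σ * κ * (ω * σ * κ + 1)) := by
    simpa only [mul_assoc] using le_sqrt_two_mul_mul_add_one (ω * σ * κ)
  set s := √(2 * ω * σ * κ * (ω * σ * κ + 1))
  have hsκ : 4 * (ω * σ) ≤ 4 / κ * s := by
    rw [div_mul_eq_mul_div, le_div_iff₀ hκ]
    linarith
  have hsplit : 4 / κ * (1 + s) = 4 / κ + 4 / κ * s := mul_one_add _ _
  have hmax₁ := le_max_left (δ 1) (4 / κ)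
  have hmax₂ := le_max_right (δ 1) (4 / κ)
  have hκ2 : 2 / κ ≤ 4 / κ := by gcongr; norm_num
  have hκ4 : 0 ≤ 4 / κ := by positivity
  refine le_div_of_le_sub_mul_sq_add_div_sq (a := ω * σ) hκ (by positivity)
    (fun t ht => by simpa only [mul_div_assoc] using hrec t ht) ?_ ?_
  · have : 0 ≤ 4 / κ * s := by positivity
    linarith
  · linarith

theorem stmt11 (δ : ℕ → ℝ) (κ ω σ : ℝ) (hκ : 0 < κ) (hω : 0 < ω) (hσ : 0 < σ)
    (hnn : ∀ t, 0 ≤ δ t)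
    (hrec : ∀ t ≥ 1, δ (t + 1) ≤ δ t - κ * (δ t)^2 + ω * (σ / (t : ℝ)^2)) :
    ∀ t ≥ 1, δ t ≤ ((4 / κ) * (1 + Real.sqrt (2 * ω * σ * κ * (ω * σ * κ + 1)))
        + 4 * max (δ 1) (4 / κ)) / (t : ℝ) :=
  stmt11_general δ κ ω σ hκ hω hσ hrec
end

section
/- Let G : Π → ℝ be L-smooth on Π = (Δ_A)^S, and suppose G(π_{k+1}) ≥ max_{π∈Π} { G(π) − C₁‖π − π_k‖² } with C₁ = (L/2)(1 + 1/((1−γ)ρ_min)). Suppose additionally that the occupancy-measure map h : μ ↦ π is (2/ρ_min)-Lipschitz from (ℝ^{SA}, ‖·‖₁) to (ℝ^{SA}, ‖·‖₂), and ‖μ − μ'‖₁ ≤ 2/(1−γ) for all occupancy measures. Then, with π* = argmax G and δ_k = G(π*) − G(π_k), the recursion δ_{k+1} ≤ min_{α∈[0,1]} { (1−α)δ_k + α²C₂ } holds with C₂ = 16C₁/(ρ_min²(1−γ)²), provided G(π) = F(μ^π) for a concave F over the convex set of occupancy measures. -/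
/-! Interpolate linearly between the occupancy measures of `πk` and `πstar`. By concavity of `F`
the policy `πα` read off the interpolant is at least as good as `(1 - α) G(πk) + α G(πstar)`, and
the Lipschitz bound on `h` together with the `ℓ¹`-diameter of `K` puts it within
`α · 4 / (ρmin (1 - γ))` of `πk`. Testing the improvement property of `πk1` against `πα` gives
the recursion. -/

open Finset

lemma sum_abs_convexComb_sub_left {ι : Type*} [Fintype ι] (x y : EuclideanSpace ℝ ι) {α : ℝ}
    (hα : 0 ≤ α) :
    ∑ i, |((1 - α) • x + α • y) i - x i| = α * ∑ i, |y i - x i| := by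
  rw [mul_sum]
  refine sum_congr rfl fun i _ => ?_
  have hi : ((1 - α) • x + α • y) i - x i = α * (y i - x i) := by
    simp only [PiLp.add_apply, PiLp.smul_apply, smul_eq_mul]
    ring
  rw [hi, abs_mul, abs_of_nonneg hα]

lemma norm_convexComb_sub_le_of_lipschitz_l1 {ι : Type*} [Fintype ι] (K : Set (EuclideanSpace ℝ ι))
    (h : EuclideanSpace ℝ ι → EuclideanSpace ℝ ι) {c d α : ℝ} (hc : 0 ≤ c) (hα : 0 ≤ α)
    (hLip : ∀ ν ∈ K, ∀ ν' ∈ K, ‖h ν - h ν'‖ ≤ c * ∑ i, |ν i - ν' i|)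
    (hdiam : ∀ ν ∈ K, ∀ ν' ∈ K, ∑ i, |ν i - ν' i| ≤ d)
    {ν ν' : EuclideanSpace ℝ ι} (hν : ν ∈ K) (hν' : ν' ∈ K)
    (hcomb : (1 - α) • ν + α • ν' ∈ K) :
    ‖h ((1 - α) • ν + α • ν') - h ν‖ ≤ α * (c * d) :=
  calc ‖h ((1 - α) • ν + α • ν') - h ν‖
      ≤ c * ∑ i, |((1 - α) • ν + α • ν') i - ν i| := hLip _ hcomb _ hν
    _ = c * (α * ∑ i, |ν' i - ν i|) := by rw [sum_abs_convexComb_sub_left _ _ hα]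
    _ ≤ c * (α * d) := by gcongr; exact hdiam _ hν' _ hν
    _ = α * (c * d) := by ring

lemma sub_le_of_quadratic_improvement {E : Type*} [SeminormedAddCommGroup E] (G : E → ℝ)
    {xstar xk xk1 y : E} {C D α : ℝ} (hC : 0 ≤ C)
    (himp : G y - C * ‖y - xk‖ ^ 2 ≤ G xk1)
    (hGy : (1 - α) * G xk + α * G xstar ≤ G y) (hdist : ‖y - xk‖ ≤ α * D) :
    G xstar - G xk1 ≤ (1 - α) * (G xstar - G xk) + α ^ 2 * (C * D ^ 2) := by
  have hsq : ‖y - xk‖ ^ 2 ≤ (α * D) ^ 2 := pow_le_pow_left₀ (norm_nonneg _) hdist 2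
  nlinarith [mul_le_mul_of_nonneg_left hsq hC]

theorem stmt16_general {ι : Type*} [Fintype ι]
    (Pol K : Set (EuclideanSpace ℝ ι)) (hK : Convex ℝ K)
    (F G : EuclideanSpace ℝ ι → ℝ)
    (occ h : EuclideanSpace ℝ ι → EuclideanSpace ℝ ι)
    (ρmin γ L : ℝ) (hρ : 0 < ρmin) (hγ1 : γ < 1) (hL : 0 ≤ L)
    (hFconc : ConcaveOn ℝ K F)
    (hG : ∀ π ∈ Pol, G π = F (occ π))
    (hocc : ∀ π ∈ Pol, occ π ∈ K)
    (hinv : ∀ π ∈ Pol, h (occ π) = π)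
    (hinv' : ∀ ν ∈ K, h ν ∈ Pol ∧ occ (h ν) = ν)
    (hLip : ∀ ν ∈ K, ∀ ν' ∈ K, ‖h ν - h ν'‖ ≤ (2 / ρmin) * ∑ i, |ν i - ν' i|)
    (hdiam : ∀ ν ∈ K, ∀ ν' ∈ K, ∑ i, |ν i - ν' i| ≤ 2 / (1 - γ))
    (πstar πk πk1 : EuclideanSpace ℝ ι)
    (hπstar : πstar ∈ Pol) (hπk : πk ∈ Pol)
    (himp : ∀ π ∈ Pol, G πk1 ≥ G π - ((L / 2) * (1 + 1 / ((1 - γ) * ρmin))) * ‖π - πk‖^2) :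
    ∀ α ∈ Set.Icc (0:ℝ) 1,
      G πstar - G πk1 ≤ (1 - α) * (G πstar - G πk)
        + α^2 * (16 * ((L / 2) * (1 + 1 / ((1 - γ) * ρmin))) / (ρmin^2 * (1 - γ)^2)) := by
  rintro α ⟨hα0, hα1⟩
  have hγ' : 0 < 1 - γ := by linarith
  have hC : 0 ≤ (L / 2) * (1 + 1 / ((1 - γ) * ρmin)) := by positivity
  have hk := hocc πk hπk
  have hs := hocc πstar hπstar
  have hμ : (1 - α) • occ πk + α • occ πstar ∈ K := hK hk hs (by linarith) hα0 (by ring)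
  obtain ⟨hπα, hoccα⟩ := hinv' _ hμ
  have hGα : (1 - α) * G πk + α * G πstar ≤ G (h ((1 - α) • occ πk + α • occ πstar)) := by
    rw [hG _ hπα, hoccα, hG _ hπk, hG _ hπstar]
    exact hFconc.2 hk hs (by linarith) hα0 (by ring)
  have hdist := norm_convexComb_sub_le_of_lipschitz_l1 K h (by positivity) hα0 hLip hdiam hk hs hμ
  rw [hinv _ hπk] at hdist
  have hrec := sub_le_of_quadratic_improvement G hC (himp _ hπα) hGα hdist
  convert hrec using 3
  field_simp
  ring

theorem stmt16 {ι : Type*} [Fintype ι]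
    (Pol K : Set (EuclideanSpace ℝ ι)) (hK : Convex ℝ K)
    (F G : EuclideanSpace ℝ ι → ℝ)
    (occ h : EuclideanSpace ℝ ι → EuclideanSpace ℝ ι)
    (ρmin γ L : ℝ) (hρ : 0 < ρmin) (hγ : 0 ≤ γ) (hγ1 : γ < 1) (hL : 0 ≤ L)
    (hFconc : ConcaveOn ℝ K F)
    (hG : ∀ π ∈ Pol, G π = F (occ π))
    (hocc : ∀ π ∈ Pol, occ π ∈ K)
    (hinv : ∀ π ∈ Pol, h (occ π) = π)
    (hinv' : ∀ ν ∈ K, h ν ∈ Pol ∧ occ (h ν) = ν)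
    (hLip : ∀ ν ∈ K, ∀ ν' ∈ K, ‖h ν - h ν'‖ ≤ (2 / ρmin) * ∑ i, |ν i - ν' i|)
    (hdiam : ∀ ν ∈ K, ∀ ν' ∈ K, ∑ i, |ν i - ν' i| ≤ 2 / (1 - γ))
    (πstar πk πk1 : EuclideanSpace ℝ ι)
    (hπstar : πstar ∈ Pol) (hπk : πk ∈ Pol) (hπk1 : πk1 ∈ Pol)
    (hmax : IsMaxOn G Pol πstar)
    (himp : ∀ π ∈ Pol, G πk1 ≥ G π - ((L / 2) * (1 + 1 / ((1 - γ) * ρmin))) * ‖π - πk‖^2) :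
    ∀ α ∈ Set.Icc (0:ℝ) 1,
      G πstar - G πk1 ≤ (1 - α) * (G πstar - G πk)
        + α^2 * (16 * ((L / 2) * (1 + 1 / ((1 - γ) * ρmin))) / (ρmin^2 * (1 - γ)^2)) :=
  stmt16_general Pol K hK F G occ h ρmin γ L hρ hγ1 hL hFconc hG hocc hinv hinv' hLip hdiam πstar πk
    πk1 hπstar hπk himp
end

section
/- Let δ_{k+1} ≤ min_{α∈[0,1]} { (1−α)δ_k + α²C } for all k ≥ 1 with δ_k ≥ 0 and C > 0. Then δ_K ≤ 4C/K for all K ≥ 2. -/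
/-!
Instead of the optimal step `δ_k / (2C)`, use the step `α = 2/k` of the classical Frank–Wolfe
analysis: if `δ_k ≤ 4C/k` then `δ_{k+1} ≤ (1 - 2/k) · 4C/k + 4C/k² = 4C(k-1)/k² ≤ 4C/(k+1)`.
The induction starts at `δ_2 ≤ C`, which is the step `α = 1`.
-/

open Set

lemma one_sub_two_div_mul_add_sq_le {C n : ℝ} (hC : 0 ≤ C) (hn : 0 < n) :
    (1 - 2 / n) * (4 * C / n) + (2 / n) ^ 2 * C ≤ 4 * C / (n + 1) := by
  have hlhs : (1 - 2 / n) * (4 * C / n) + (2 / n) ^ 2 * C = 4 * C * (n - 1) / n ^ 2 := by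
    field_simp
    ring
  rw [hlhs, div_le_div_iff₀ (by positivity) (by positivity)]
  nlinarith [mul_nonneg hC zero_le_one]

lemma le_four_mul_div_add_one {a b C n : ℝ} (hC : 0 ≤ C) (hn : 2 ≤ n)
    (hb : ∀ α ∈ Icc (0 : ℝ) 1, b ≤ (1 - α) * a + α ^ 2 * C) (ha : a ≤ 4 * C / n) :
    b ≤ 4 * C / (n + 1) := by
  have hn0 : 0 < n := by linarith
  have hα : 2 / n ∈ Icc (0 : ℝ) 1 :=
    ⟨by positivity, (div_le_one hn0).2 hn⟩
  have hα' : 0 ≤ 1 - 2 / n := sub_nonneg.2 hα.2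
  calc b ≤ (1 - 2 / n) * a + (2 / n) ^ 2 * C := hb _ hα
    _ ≤ (1 - 2 / n) * (4 * C / n) + (2 / n) ^ 2 * C := by gcongr
    _ ≤ 4 * C / (n + 1) := one_sub_two_div_mul_add_sq_le hC hn0

theorem stmt17_general (δ : ℕ → ℝ) (C : ℝ) (hC : 0 < C)
    (hrec : ∀ k ≥ 1, ∀ α ∈ Set.Icc (0:ℝ) 1, δ (k + 1) ≤ (1 - α) * δ k + α^2 * C) :
    ∀ K ≥ 2, δ K ≤ 4 * C / (K : ℝ) := by
  intro K hK
  induction K, hK using Nat.le_induction with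
  | base =>
    have h2 := hrec 1 le_rfl 1 ⟨zero_le_one, le_rfl⟩
    norm_num at h2 ⊢
    linarith
  | succ n hn ih =>
    push_cast
    exact le_four_mul_div_add_one hC.le (by exact_mod_cast hn) (hrec n (by omega)) ih

theorem stmt17 (δ : ℕ → ℝ) (C : ℝ) (hC : 0 < C) (hnn : ∀ k, 0 ≤ δ k)
    (hrec : ∀ k ≥ 1, ∀ α ∈ Set.Icc (0:ℝ) 1, δ (k + 1) ≤ (1 - α) * δ k + α^2 * C) :
    ∀ K ≥ 2, δ K ≤ 4 * C / (K : ℝ) :=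
  stmt17_general δ C hC hrec
end
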